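/- Let $F$ be a field, $n, u$ positive integers with $x^n - u$ irreducible over $\mathbb{Q}$, and let $g \in F(x_0,\dots,x_{n-1}) \setminus F$. Then $g, g^*, \dots, g^{(n-1)*}$ are algebraically independent over $F$, where $(\ )^*$ is the $F$-monomorphism of $F(x_0,\dots,x_{n-1})$ determined by $x_i^* = x_{i+1}$ for $0 \le i < n-1$ and $x_{n-1}^* = x_0^u$. -/

import Mathlib

open MvPolynomial

noncomputable section

/-- The rational function field `F(x₀,…,x_{n-1})`. -/
abbrev KK (n : ℕ) (F : Type*) [Field F] := FractionRing (MvPolynomial (Fin n) F)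

def toKK {n : ℕ} {F : Type*} [Field F] : MvPolynomial (Fin n) F →+* KK n F := algebraMap _ _

/-- `σ` is the star monomorphism: `xᵢ* = x_{i+1}` for `i < n-1` and `x_{n-1}* = x₀^u`. -/
def IsStar {F : Type*} [Field F] (n u : ℕ) (σ : KK n F →ₐ[F] KK n F) : Prop :=
  ∀ i : Fin n, σ (toKK (X i)) =
    toKK (if h : (i : ℕ) + 1 < n then X (⟨(i : ℕ) + 1, h⟩ : Fin n)
          else X (⟨0, i.pos⟩ : Fin n) ^ u)

/-!
Give `x_i` the weight `α ^ i`, where `α = u ^ (1/n)`. Irreducibility of `X ^ n - u` makes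
`1, α, …, α ^ (n-1)` linearly independent over `ℚ`, so distinct monomials have distinct weights;
hence the weighted degree `d` is additive on products and `2 ^ d` is a valuation `v` on
`F(x₀, …, x_{n-1})`. The star map multiplies every weight by `α` (the weight of `x₀ ^ u` is
`u = α ^ n`), so `v (h*) = v h ^ α`. After subtracting a constant from `g` we may assume
`v g ≠ 1`. Then the monomial `∏ᵢ (g^{i*}) ^ aᵢ` has valuation `v g ^ (∑ᵢ aᵢ αⁱ)`, and these are
pairwise distinct, so no nontrivial `F`-linear combination of such monomials vanishes.
-/

open NNReal

namespace Valuation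

section

variable {R Γ : Type*} [CommRing R] [LinearOrderedCommGroupWithZero Γ] (v : Valuation R Γ)

lemma sum_ne_zero_of_injOn {ι : Type*} {s : Finset ι} (hs : s.Nonempty) {f : ι → R}
    (hf : ∀ i ∈ s, v (f i) ≠ 0) (hinj : Set.InjOn (fun i => v (f i)) s) :
    ∑ i ∈ s, f i ≠ 0 := by
  classical
  obtain ⟨j, hj, hmax⟩ := s.exists_max_image (fun i => v (f i)) hs
  have hsum : v (∑ i ∈ s, f i) = v (f j) := v.map_sum_eq_of_lt hj fun i hi => by
    obtain ⟨hi, hij⟩ := Finset.mem_sdiff.1 hi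
    exact (hmax i hi).lt_of_ne (hinj.ne hi hj (by simpa using hij))
  intro h0
  exact hf j hj (by rw [← hsum, h0, map_zero])

end

variable {F K ι : Type*} [Field F] [Field K] [Algebra F K]

theorem algebraicIndependent_of_injective_monomial {Γ : Type*} [LinearOrderedCommGroupWithZero Γ]
    {v : Valuation K Γ} (hv : ∀ c : F, c ≠ 0 → v (algebraMap F K c) = 1) {x : ι → K}
    (hx : ∀ i, x i ≠ 0)
    (hinj : Function.Injective fun a : ι →₀ ℕ => v (a.prod fun i k => x i ^ k)) :
    AlgebraicIndependent F x := by
  rw [algebraicIndependent_iff]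
  intro Q hQ
  by_contra hQ0
  have hterm (a : ι →₀ ℕ) (ha : a ∈ Q.support) :
      v (algebraMap F K (Q.coeff a) * a.prod fun i k => x i ^ k) =
        v (a.prod fun i k => x i ^ k) := by
    rw [map_mul, hv _ (mem_support_iff.1 ha), one_mul]
  have hsum : ∑ a ∈ Q.support, algebraMap F K (Q.coeff a) * (a.prod fun i k => x i ^ k) = 0 := by
    rwa [aeval_def, eval₂_eq] at hQ
  refine v.sum_ne_zero_of_injOn (support_nonempty.2 hQ0) (fun a ha => ?_) (fun a ha b hb h => ?_)
    hsum
  · rw [hterm a ha, Valuation.ne_zero_iff]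
    exact Finset.prod_ne_zero_iff.2 fun i _ => pow_ne_zero _ (hx i)
  · exact hinj (by simpa only [hterm a ha, hterm b hb] using h)

variable {v : Valuation K ℝ≥0} {x : ι → K} {γ : ℝ≥0} {w : ι → ℝ≥0}

lemma map_prod_pow_eq_rpow_weight (hγ : γ ≠ 0) (hx : ∀ i, v (x i) = γ ^ (w i : ℝ))
    (a : ι →₀ ℕ) : v (a.prod fun i k => x i ^ k) = γ ^ (Finsupp.weight w a : ℝ) := by
  induction a using Finsupp.induction_linear with
  | zero => simp
  | add a b ha hb =>
    rw [Finsupp.prod_add_index' (fun _ => pow_zero _) (fun _ _ _ => pow_add _ _ _), map_mul,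
      ha, hb, map_add, NNReal.coe_add, NNReal.rpow_add hγ]
  | single i k =>
    rw [Finsupp.prod_single_index (h := fun i k => x i ^ k) (pow_zero (x i)), map_pow, hx,
      Finsupp.weight_single, nsmul_eq_mul, NNReal.coe_mul, mul_comm, NNReal.rpow_mul,
      NNReal.coe_natCast, NNReal.rpow_natCast]

theorem algebraicIndependent_of_eq_rpow_weight (hv : ∀ c : F, c ≠ 0 → v (algebraMap F K c) = 1)
    (hγ0 : γ ≠ 0) (hγ1 : γ ≠ 1) (hw : Function.Injective (Finsupp.weight w : (ι →₀ ℕ) →+ ℝ≥0))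
    (hx : ∀ i, v (x i) = γ ^ (w i : ℝ)) :
    AlgebraicIndependent F x := by
  refine algebraicIndependent_of_injective_monomial hv (fun i => ?_) fun a b hab => hw ?_
  · rw [← v.ne_zero_iff, hx]
    positivity
  · simpa only [map_prod_pow_eq_rpow_weight hγ0 hx, NNReal.rpow_right_inj hγ0 hγ1,
      NNReal.coe_inj] using hab

end Valuation

lemma AlgebraicIndependent.add_algebraMap {ι F A : Type*} [Field F] [CommRing A] [Algebra F A]
    {x : ι → A} (hx : AlgebraicIndependent F x) (c : F) :
    AlgebraicIndependent F fun i => x i + algebraMap F A c := by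
  have hX : Transcendental F (Polynomial.X + Polynomial.C c) :=
    Polynomial.transcendental _ (by simp) (by simp)
  simpa using hx.polynomial_aeval_of_transcendental (f := fun _ => Polynomial.X + Polynomial.C c)
    fun _ => hX

lemma natDegree_minpoly_of_irreducible {n u : ℕ} (hn : 0 < n)
    (hirr : Irreducible ((Polynomial.X : Polynomial ℚ) ^ n - Polynomial.C (u : ℚ))) {x : ℝ}
    (hx : x ^ n = u) : (minpoly ℚ x).natDegree = n := by
  rw [← minpoly.eq_of_irreducible_of_monic hirr (by simp [hx])
    (Polynomial.monic_X_pow_sub_C _ hn.ne'), Polynomial.natDegree_X_pow_sub_C]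

/-- The paper's degree `d` on monomials: `d (xᵢ) = α ^ i`. -/
abbrev powWeight (α : ℝ≥0) (n : ℕ) : (Fin n →₀ ℕ) →+ ℝ≥0 :=
  Finsupp.weight fun i : Fin n => α ^ (i : ℕ)

lemma powWeight_single {α : ℝ≥0} {n : ℕ} (i : Fin n) (k : ℕ) :
    powWeight α n (Finsupp.single i k) = k * α ^ (i : ℕ) :=
  (Finsupp.weight_single _ i k).trans (nsmul_eq_mul _ _)

lemma powWeight_injective {α : ℝ≥0} {n : ℕ} (h : (minpoly ℚ (α : ℝ)).natDegree = n) :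
    Function.Injective (powWeight α n) := by
  subst h
  have hℕ := (linearIndependent_pow (K := ℚ) (α : ℝ)).restrict_scalars' ℕ
  refine LinearIndependent.of_comp (NNReal.toRealHom : ℝ≥0 →+ ℝ).toNatLinearMap ?_
  convert hℕ with i
  · simp
  · rfl

lemma NNReal.strictMono_two_rpow : StrictMono fun t : ℝ≥0 => (2 : ℝ≥0) ^ (t : ℝ) :=
  fun _ _ h => NNReal.rpow_lt_rpow_of_exponent_lt one_lt_two (NNReal.coe_lt_coe.2 h)

namespace MvPolynomial

open AddMonoidAlgebra

section Valuation

variable {σ R : Type*} [CommRing R] [IsDomain R] {D : (σ →₀ ℕ) →+ ℝ≥0}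

lemma supDegree_C_mul (hD : Function.Injective D) {q : MvPolynomial σ R} {c : R} (hc : c ≠ 0)
    (hq : q ≠ 0) : (C c * q).supDegree D = q.supDegree D := by
  have hcq : (C c * q).leadingCoeff D ≠ 0 := by
    rw [leadingCoeff_ne_zero hD]
    exact mul_ne_zero (C_ne_zero.2 hc) hq
  rw [supDegree_mul hD (map_add D) (by rwa [← leadingCoeff_mul hD (map_add D)]) (C_ne_zero.2 hc)
    hq, C_apply, ← single_eq_monomial, supDegree_single_ne_zero _ hc, map_zero, zero_add]

lemma leadingCoeff_C_mul (hD : Function.Injective D) (q : MvPolynomial σ R) (c : R) :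
    (C c * q).leadingCoeff D = c * q.leadingCoeff D := by
  rw [leadingCoeff_mul hD (map_add D), C_apply, ← single_eq_monomial, leadingCoeff_single hD]

open Classical in
/-- The paper's degree `d`, written multiplicatively as `2 ^ d` (any base `> 1` would do) so
that it becomes a valuation. -/
def intWeightedValuation (hD : Function.Injective D) : Valuation (MvPolynomial σ R) ℝ≥0 where
  toFun p := if p = 0 then 0 else 2 ^ ((p.supDegree D : ℝ≥0) : ℝ)
  map_zero' := if_pos rfl
  map_one' := by
    rw [if_neg one_ne_zero, AddMonoidAlgebra.one_def, supDegree_single_ne_zero _ one_ne_zero,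
      map_zero, NNReal.coe_zero, NNReal.rpow_zero]
  map_mul' p q := by
    by_cases hp : p = 0
    · simp [hp]
    by_cases hq : q = 0
    · simp [hq]
    rw [if_neg (mul_ne_zero hp hq), if_neg hp, if_neg hq,
      supDegree_mul hD (map_add D) _ hp hq, NNReal.coe_add, NNReal.rpow_add two_ne_zero]
    exact mul_ne_zero ((leadingCoeff_ne_zero hD).2 hp) ((leadingCoeff_ne_zero hD).2 hq)
  map_add_le_max' p q := by
    by_cases hp : p = 0
    · simp [hp]
    by_cases hq : q = 0
    · simp [hq]
    simp only [if_neg hp, if_neg hq]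
    split_ifs
    · exact zero_le
    exact (strictMono_two_rpow.monotone supDegree_add_le).trans_eq
      strictMono_two_rpow.monotone.map_max

variable (hD : Function.Injective D) {p q : MvPolynomial σ R}

lemma intWeightedValuation_of_ne_zero (hp : p ≠ 0) :
    intWeightedValuation hD p = 2 ^ ((p.supDegree D : ℝ≥0) : ℝ) :=
  if_neg hp

lemma intWeightedValuation_ne_zero (hp : p ≠ 0) : intWeightedValuation hD p ≠ 0 := by
  rw [intWeightedValuation_of_ne_zero hD hp]
  positivity

lemma intWeightedValuation_lt_of_supDegree_lt (hq : q ≠ 0) (h : p.supDegree D < q.supDegree D) :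
    intWeightedValuation hD p < intWeightedValuation hD q := by
  rw [intWeightedValuation_of_ne_zero hD hq]
  by_cases hp : p = 0
  · rw [hp, map_zero]
    positivity
  rw [intWeightedValuation_of_ne_zero hD hp]
  exact strictMono_two_rpow h

lemma intWeightedValuation_C {c : R} (hc : c ≠ 0) : intWeightedValuation hD (C c) = 1 := by
  rw [intWeightedValuation_of_ne_zero hD (C_ne_zero.2 hc), C_apply, ← single_eq_monomial,
    supDegree_single_ne_zero _ hc, map_zero, NNReal.coe_zero, NNReal.rpow_zero]

variable (R) in
def weightedValuation : Valuation (FractionRing (MvPolynomial σ R)) ℝ≥0 :=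
  (intWeightedValuation (R := R) hD).extendToLocalization
    (fun _ hp => intWeightedValuation_ne_zero hD (nonZeroDivisors.ne_zero hp)) _

@[simp]
lemma weightedValuation_algebraMap (p : MvPolynomial σ R) :
    weightedValuation R hD (algebraMap _ _ p) = intWeightedValuation hD p :=
  Valuation.extendToLocalization_apply_map_apply ..

lemma weightedValuation_algebraMap_of_ne_zero {c : R} (hc : c ≠ 0) :
    weightedValuation R hD (algebraMap R _ c) = 1 := by
  rw [IsScalarTower.algebraMap_apply R (MvPolynomial σ R), algebraMap_eq,
    weightedValuation_algebraMap, intWeightedValuation_C hD hc]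

end Valuation

section Field

variable {σ F : Type*} [Field F] {D : (σ →₀ ℕ) →+ ℝ≥0} (hD : Function.Injective D)

lemma algebraMap_div_sub_algebraMap (p : MvPolynomial σ F) {q : MvPolynomial σ F} (hq : q ≠ 0)
    (c : F) :
    algebraMap _ (FractionRing (MvPolynomial σ F)) p / algebraMap _ _ q - algebraMap F _ c =
      algebraMap _ _ (p - C c * q) / algebraMap _ _ q := by
  have hq' : algebraMap _ (FractionRing (MvPolynomial σ F)) q ≠ 0 :=
    IsFractionRing.to_map_ne_zero_of_mem_nonZeroDivisors (mem_nonZeroDivisors_of_ne_zero hq)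
  rw [IsScalarTower.algebraMap_apply F (MvPolynomial σ F), algebraMap_eq, map_sub, map_mul,
    eq_div_iff hq', sub_mul, div_mul_cancel₀ _ hq']

lemma exists_weightedValuation_sub_algebraMap_ne_one {g : FractionRing (MvPolynomial σ F)}
    (hg : g ∉ Set.range (algebraMap F _)) :
    ∃ c : F, weightedValuation F hD (g - algebraMap F _ c) ≠ 1 := by
  obtain ⟨p, q, hq, rfl⟩ := IsFractionRing.div_surjective (A := MvPolynomial σ F) g
  have hq0 : q ≠ 0 := nonZeroDivisors.ne_zero hq
  have hp0 : p ≠ 0 := by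
    rintro rfl
    exact hg ⟨0, by simp⟩
  by_cases hv : weightedValuation F hD (algebraMap _ _ p / algebraMap _ _ q) = 1
  swap
  · exact ⟨0, by simpa using hv⟩
  rw [map_div₀, weightedValuation_algebraMap, weightedValuation_algebraMap,
    div_eq_one_iff_eq (intWeightedValuation_ne_zero hD hq0)] at hv
  have hdeg : p.supDegree D = q.supDegree D := by
    refine le_antisymm (not_lt.1 fun h => ?_) (not_lt.1 fun h => ?_)
    · exact (intWeightedValuation_lt_of_supDegree_lt hD hp0 h).ne' hv
    · exact (intWeightedValuation_lt_of_supDegree_lt hD hq0 h).ne hv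
  -- `c` cancels the common leading monomial of `p` and `q`, so `v (p - c q) < v q`.
  set c := p.leadingCoeff D / q.leadingCoeff D
  have hc : c ≠ 0 :=
    div_ne_zero ((leadingCoeff_ne_zero hD).2 hp0) ((leadingCoeff_ne_zero hD).2 hq0)
  have hlead : p.leadingCoeff D = (C c * q).leadingCoeff D := by
    rw [leadingCoeff_C_mul hD, div_mul_cancel₀ _ ((leadingCoeff_ne_zero hD).2 hq0)]
  refine ⟨c, ?_⟩
  rw [algebraMap_div_sub_algebraMap p hq0]
  rcases supDegree_sub_lt_of_leadingCoeff_eq hD (hdeg.trans (supDegree_C_mul hD hc hq0).symm)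
    hlead with hlt | heq
  · rw [map_div₀, weightedValuation_algebraMap, weightedValuation_algebraMap]
    refine ((div_lt_one (pos_of_ne_zero (intWeightedValuation_ne_zero hD hq0))).2 ?_).ne
    exact intWeightedValuation_lt_of_supDegree_lt hD hq0 (hlt.trans_eq hdeg)
  · refine (hg ⟨c, (sub_eq_zero.1 ?_).symm⟩).elim
    rw [algebraMap_div_sub_algebraMap p hq0, heq, sub_self, map_zero, zero_div]

end Field

end MvPolynomial

section Star

open AddMonoidAlgebra

variable {F : Type*} [Field F] {n u : ℕ} {α : ℝ≥0}

def starExponent (n u : ℕ) (i : Fin n) : Fin n →₀ ℕ :=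
  if h : (i : ℕ) + 1 < n then Finsupp.single ⟨i + 1, h⟩ 1 else Finsupp.single ⟨0, i.pos⟩ u

variable (F n u) in
def starPoly : MvPolynomial (Fin n) F →ₐ[F] MvPolynomial (Fin n) F :=
  mapDomainAlgHom F F (Finsupp.weight (starExponent n u))

lemma starPoly_X (i : Fin n) :
    starPoly F n u (X i) =
      if h : (i : ℕ) + 1 < n then X ⟨i + 1, h⟩ else X (⟨0, i.pos⟩ : Fin n) ^ u := by
  rw [starPoly, mapDomainAlgHom_apply, X, ← single_eq_monomial, mapDomain_single,
    Finsupp.weight_single, one_smul, starExponent]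
  split_ifs
  · rfl
  · rw [X_pow_eq_monomial, single_eq_monomial]

lemma IsStar.apply_algebraMap {σ : KK n F →ₐ[F] KK n F} (hσ : IsStar n u σ)
    (p : MvPolynomial (Fin n) F) : σ (algebraMap _ _ p) = algebraMap _ _ (starPoly F n u p) := by
  have : σ.comp (IsScalarTower.toAlgHom F _ (KK n F)) =
      (IsScalarTower.toAlgHom F _ (KK n F)).comp (starPoly F n u) := by
    refine algHom_ext fun i => ?_
    simpa [starPoly_X, toKK] using hσ i
  exact DFunLike.congr_fun this p

lemma powWeight_starExponent (hα : α ^ n = u) (i : Fin n) :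
    powWeight α n (starExponent n u i) = α ^ ((i : ℕ) + 1) := by
  rw [starExponent]
  split_ifs with h
  · simp [powWeight_single]
  · rw [powWeight_single, show (i : ℕ) + 1 = n by omega, hα]
    simp

lemma powWeight_weight_starExponent (hα : α ^ n = u) (a : Fin n →₀ ℕ) :
    powWeight α n (Finsupp.weight (starExponent n u) a) = α * powWeight α n a := by
  induction a using Finsupp.induction_linear with
  | zero => simp
  | add a b ha hb => simp only [map_add, ha, hb, mul_add]
  | single i k =>
    rw [Finsupp.weight_single, map_nsmul, powWeight_starExponent hα, powWeight_single,
      nsmul_eq_mul, pow_succ']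
    ring

variable (hD : Function.Injective (powWeight α n)) (hα0 : α ≠ 0) (hα : α ^ n = u)
include hα0 hα

lemma intWeightedValuation_starPoly (p : MvPolynomial (Fin n) F) :
    intWeightedValuation hD (starPoly F n u p) = intWeightedValuation hD p ^ (α : ℝ) := by
  classical
  have hT : Function.Injective (Finsupp.weight (starExponent n u)) := fun a b h =>
    hD (mul_left_cancel₀ hα0 (by rw [← powWeight_weight_starExponent hα, h,
      powWeight_weight_starExponent hα]))
  by_cases hp : p = 0
  · simp [hp, NNReal.zero_rpow (NNReal.coe_ne_zero.2 hα0)]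
  have hSp : starPoly F n u p ≠ 0 := fun h => hp (mapDomain_injective hT
    (by rw [← mapDomainAlgHom_apply F F, ← starPoly, h, mapDomain_zero]))
  have hdeg : (starPoly F n u p).supDegree (powWeight α n) = α * p.supDegree (powWeight α n) := by
    rw [starPoly, mapDomainAlgHom_apply, supDegree, coeff_mapDomain,
      Finsupp.mapDomain_support_of_injective hT, Finset.sup_image, Finset.mul_sup₀]
    exact Finset.sup_congr rfl fun a _ => powWeight_weight_starExponent hα a
  rw [intWeightedValuation_of_ne_zero hD hSp, intWeightedValuation_of_ne_zero hD hp, hdeg,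
    NNReal.coe_mul, mul_comm, NNReal.rpow_mul]

variable {σ : KK n F →ₐ[F] KK n F} (hσ : IsStar n u σ)
include hσ

lemma IsStar.weightedValuation_map (h : KK n F) :
    weightedValuation F hD (σ h) = weightedValuation F hD h ^ (α : ℝ) := by
  obtain ⟨p, q, -, rfl⟩ := IsFractionRing.div_surjective (A := MvPolynomial (Fin n) F) h
  simp only [map_div₀, hσ.apply_algebraMap, weightedValuation_algebraMap,
    intWeightedValuation_starPoly hD hα0 hα, NNReal.div_rpow]

lemma IsStar.weightedValuation_iterate (h : KK n F) (k : ℕ) :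
    weightedValuation F hD (σ^[k] h) = weightedValuation F hD h ^ ((α ^ k : ℝ≥0) : ℝ) := by
  induction k with
  | zero => simp
  | succ k ih =>
    rw [Function.iterate_succ_apply', hσ.weightedValuation_map hD hα0 hα, ih,
      ← NNReal.rpow_mul, pow_succ, NNReal.coe_mul]

end Star

theorem star_iterates_algebraicIndependent {F : Type*} [Field F] (n u : ℕ)
    (hn : 0 < n) (hu : 0 < u)
    (hirr : Irreducible ((Polynomial.X : Polynomial ℚ) ^ n - Polynomial.C (u : ℚ)))
    (σ : KK n F →ₐ[F] KK n F) (hσ : IsStar n u σ)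
    (g : KK n F) (hg : g ∉ Set.range (algebraMap F (KK n F))) :
    AlgebraicIndependent F (fun i : Fin n => (⇑σ)^[(i : ℕ)] g) := by
  set α : ℝ≥0 := (u : ℝ≥0) ^ (n : ℝ)⁻¹
  have hα : α ^ n = u := NNReal.rpow_inv_natCast_pow _ hn.ne'
  have hα0 : α ≠ 0 := by
    rintro h
    rw [h, zero_pow hn.ne'] at hα
    exact hu.ne (by exact_mod_cast hα)
  have hD : Function.Injective (powWeight α n) :=
    powWeight_injective (natDegree_minpoly_of_irreducible hn hirr (by exact_mod_cast hα))
  obtain ⟨c, hc⟩ := exists_weightedValuation_sub_algebraMap_ne_one hD hg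
  have hgc : g - algebraMap F _ c ≠ 0 := sub_ne_zero.2 fun h => hg ⟨c, h.symm⟩
  have hind := Valuation.algebraicIndependent_of_eq_rpow_weight
    (x := fun i : Fin n => σ^[i] (g - algebraMap F _ c))
    (fun _ => weightedValuation_algebraMap_of_ne_zero hD) ((Valuation.ne_zero_iff _).2 hgc) hc hD
    fun i => hσ.weightedValuation_iterate hD hα0 hα _ _
  simpa [← AlgHom.coe_pow, map_sub] using hind.add_algebraMap c
end
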